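/- arXiv:2505.01667 — 5 statements merged into one kernel-verified Lean document; each statement's English description precedes it below -/
import Mathlib

section
/- Let n ≥ 3 be an integer and t an integer. Define x_1 = x_2 = ... = x_{n-2} = 8t(t^2+1)(t^2-1), x_{n-1} = (t^2-1)((n-2)t^4 + (2n-20)t^2 + n-2), and x_n = 2t((n-6)t^4 + (2n+4)t^2 + n-6). Then for each i in {1,...,n}, the sum (x_1^2 + ... + x_n^2) - x_i^2 is a perfect square. -/
theorem stmt_5 (n : ℕ) (hn : 3 ≤ n) (t : ℤ)
    (x : Fin n → ℤ)
    (hx1 : ∀ i : Fin n, (i : ℕ) < n - 2 → x i = 8 * t * (t ^ 2 + 1) * (t ^ 2 - 1))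
    (hx2 : ∀ i : Fin n, (i : ℕ) = n - 2 →
      x i = (t ^ 2 - 1) * ((n - 2 : ℤ) * t ^ 4 + (2 * n - 20 : ℤ) * t ^ 2 + (n - 2 : ℤ)))
    (hx3 : ∀ i : Fin n, (i : ℕ) = n - 1 →
      x i = 2 * t * ((n - 6 : ℤ) * t ^ 4 + (2 * n + 4 : ℤ) * t ^ 2 + (n - 6 : ℤ))) :
    ∀ i : Fin n, ∃ m : ℤ, (∑ j, (x j) ^ 2) - (x i) ^ 2 = m ^ 2 := by
  obtain ⟨k, rfl⟩ : ∃ k, n = k + 2 := ⟨n - 2, by omega⟩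
  set a : ℤ := 8 * t * (t ^ 2 + 1) * (t ^ 2 - 1) with ha
  set b : ℤ := (t ^ 2 - 1) * (((k:ℤ) + 2 - 2) * t ^ 4 + (2 * ((k:ℤ)+2) - 20) * t ^ 2 + ((k:ℤ) + 2 - 2)) with hb
  set c : ℤ := 2 * t * (((k:ℤ) + 2 - 6) * t ^ 4 + (2 * ((k:ℤ)+2) + 4) * t ^ 2 + ((k:ℤ) + 2 - 6)) with hc
  have hksimp : k + 2 - 2 = k := by omega
  have hxval : ∀ j : Fin (k+2), (x j) ^ 2 =
      (fun i : ℕ => if i < k then a ^ 2 else if i = k then b ^ 2 else c ^ 2) (j : ℕ) := by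
    intro j
    by_cases h1 : (j : ℕ) < k
    · simp only [h1, if_pos]
      rw [hx1 j (by omega)]
    · by_cases h2 : (j : ℕ) = k
      · simp only [h2, if_neg (lt_irrefl k), if_pos rfl]
        rw [hx2 j (by omega)]
        push_cast; ring
      · have h3 : (j : ℕ) = k + 1 := by omega
        simp only [h3, if_neg (show ¬ k+1 < k by omega), if_neg (show ¬ k+1 = k by omega)]
        rw [hx3 j (by omega)]
        push_cast; ring
  have hsum : (∑ j, (x j) ^ 2) = (k : ℤ) * a ^ 2 + b ^ 2 + c ^ 2 := by
    calc (∑ j : Fin (k+2), (x j) ^ 2)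
        = ∑ i ∈ Finset.range (k+2),
            (fun i : ℕ => if i < k then a ^ 2 else if i = k then b ^ 2 else c ^ 2) i := by
          rw [← Fin.sum_univ_eq_sum_range]
          exact Finset.sum_congr rfl (fun j _ => hxval j)
      _ = (k : ℤ) * a ^ 2 + b ^ 2 + c ^ 2 := by
          rw [Finset.sum_range_succ, Finset.sum_range_succ]
          have : ∀ i ∈ Finset.range k,
              (if i < k then a ^ 2 else if i = k then b ^ 2 else c ^ 2) = a ^ 2 := by
            intro i hi
            simp [Finset.mem_range.mp hi]
          rw [Finset.sum_congr rfl this, Finset.sum_const, Finset.card_range]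
          simp only [lt_irrefl, if_neg, if_pos, Nat.lt_irrefl]
          have h1 : ¬ (k < k) := lt_irrefl k
          have h2 : ¬ (k + 1 < k) := by omega
          have h3 : ¬ (k + 1 = k) := by omega
          simp [h1, h2, h3, nsmul_eq_mul]
  intro i
  rw [hsum]
  by_cases h1 : (i : ℕ) < k
  · refine ⟨((k:ℤ)+2-2) * (t ^ 2 + 1) ^ 3, ?_⟩
    rw [hx1 i (by omega), ha, hb, hc]; ring
  · by_cases h2 : (i : ℕ) = k
    · refine ⟨2 * t * (((k:ℤ)+2+2) * t ^ 4 + (2 * ((k:ℤ)+2) - 12) * t ^ 2 + ((k:ℤ)+2+2)), ?_⟩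
      rw [hx2 i (by omega)]
      rw [ha, hb, hc]; push_cast; ring
    · refine ⟨(t ^ 2 - 1) * (((k:ℤ)+2-2) * t ^ 4 + (2 * ((k:ℤ)+2) + 12) * t ^ 2 + ((k:ℤ)+2-2)), ?_⟩
      rw [hx3 i (by omega)]
      rw [ha, hb, hc]; push_cast; ring
end

section
/- Let m ≥ 2 be an integer, n = m^2 + 1, and t an integer. Define x_1 = x_2 = ... = x_{n-1} = 2t and x_n = (n-2)t^2 - 1. Then for each i in {1,...,n}, the sum (x_1^2 + ... + x_n^2) - x_i^2 is a perfect square. -/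
theorem stmt_7 (m : ℕ) (hm : 2 ≤ m) (n : ℕ) (hn : n = m ^ 2 + 1) (t : ℤ)
    (x : Fin n → ℤ)
    (hx1 : ∀ i : Fin n, (i : ℕ) < n - 1 → x i = 2 * t)
    (hx2 : ∀ i : Fin n, (i : ℕ) = n - 1 → x i = (n - 2 : ℤ) * t ^ 2 - 1) :
    ∀ i : Fin n, ∃ k : ℤ, (∑ j, (x j) ^ 2) - (x i) ^ 2 = k ^ 2 := by
  subst hn
  have hcast : ((m ^ 2 + 1 : ℕ) : ℤ) - 2 = (m : ℤ) ^ 2 - 1 := by push_cast; ring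
  have hsum : (∑ j : Fin (m ^ 2 + 1), (x j) ^ 2)
      = (m : ℤ) ^ 2 * (2 * t) ^ 2 + (((m : ℤ) ^ 2 - 1) * t ^ 2 - 1) ^ 2 := by
    rw [Fin.sum_univ_castSucc]
    have h1 : ∀ i : Fin (m ^ 2), x i.castSucc = 2 * t := by
      intro i
      exact hx1 _ (by simpa using i.isLt)
    have h2 : x (Fin.last (m ^ 2)) = ((m : ℤ) ^ 2 - 1) * t ^ 2 - 1 := by
      rw [hx2 _ (by simp), hcast]
    rw [h2, Finset.sum_congr rfl (fun i _ => by rw [h1 i])]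
    simp [mul_comm]
  intro i
  rcases lt_or_eq_of_le (Nat.lt_succ_iff.mp i.isLt) with h | h
  · refine ⟨((m : ℤ) ^ 2 - 1) * t ^ 2 + 1, ?_⟩
    rw [hsum, hx1 i (by omega)]
    ring
  · refine ⟨2 * m * t, ?_⟩
    rw [hsum, hx2 i (by omega), hcast]
    ring
end

section
/- Let n ≥ 3 and suppose integers x_1,...,x_n, y_1,...,y_n satisfy x_i^2 + y_i^2 = x_j^2 + y_j^2 for all i, j, and x_1^2 + y_1^2 = x_1^2 + ... + x_n^2. Set P = x_1 y_1 + ... + x_n y_n and S = x_1^2 + ... + x_n^2, and define X_i = (n-2)S x_i - 2P y_i and Y_i = 2P x_i + (n-2)S y_i. Then X_i^2 + Y_i^2 = X_j^2 + Y_j^2 for all i, j, and X_1^2 + Y_1^2 = X_1^2 + ... + X_n^2. -/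
theorem stmt_9 (n : ℕ) (hn : 3 ≤ n) (x y : Fin n → ℤ)
    (hchain : ∀ i j : Fin n, (x i) ^ 2 + (y i) ^ 2 = (x j) ^ 2 + (y j) ^ 2)
    (hsum : (x ⟨0, by omega⟩) ^ 2 + (y ⟨0, by omega⟩) ^ 2 = ∑ j, (x j) ^ 2)
    (P S : ℤ) (hP : P = ∑ i, x i * y i) (hS : S = ∑ i, (x i) ^ 2)
    (X Y : Fin n → ℤ)
    (hX : ∀ i, X i = (n - 2 : ℤ) * S * x i - 2 * P * y i)
    (hY : ∀ i, Y i = 2 * P * x i + (n - 2 : ℤ) * S * y i) :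
    (∀ i j : Fin n, (X i) ^ 2 + (Y i) ^ 2 = (X j) ^ 2 + (Y j) ^ 2) ∧
    (X ⟨0, by omega⟩) ^ 2 + (Y ⟨0, by omega⟩) ^ 2 = ∑ j, (X j) ^ 2 := by
  have hc : ∀ i : Fin n, x i ^ 2 + y i ^ 2 = S := fun i => by
    rw [hchain i ⟨0, by omega⟩, hsum, hS]
  have hkey : ∀ i : Fin n, X i ^ 2 + Y i ^ 2
      = (((n : ℤ) - 2) ^ 2 * S ^ 2 + 4 * P ^ 2) * (x i ^ 2 + y i ^ 2) := fun i => by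
    rw [hX, hY]; ring
  constructor
  · intro i j
    rw [hkey i, hkey j, hc i, hc j]
  · have hy2 : ∑ j, y j ^ 2 = (n : ℤ) * S - S := by
      have h1 : ∑ j, (x j ^ 2 + y j ^ 2) = (n : ℤ) * S := by
        rw [Finset.sum_congr rfl fun j _ => hc j]
        simp [mul_comm]
      have h2 : ∑ j, (x j ^ 2 + y j ^ 2) = S + ∑ j, y j ^ 2 := by
        rw [Finset.sum_add_distrib, ← hS]
      linarith
    have hex : ∀ j : Fin n, X j ^ 2
        = ((n : ℤ) - 2) ^ 2 * S ^ 2 * x j ^ 2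
          - 4 * ((n : ℤ) - 2) * S * P * (x j * y j) + 4 * P ^ 2 * y j ^ 2 := fun j => by
      rw [hX]; ring
    rw [hkey, hc, Finset.sum_congr rfl fun j _ => hex j]
    rw [Finset.sum_add_distrib, Finset.sum_sub_distrib, ← Finset.mul_sum, ← Finset.mul_sum,
      ← Finset.mul_sum, ← hS, ← hP, hy2]
    ring
end

section
/- For all integers p_1, p_2 generated as follows, the discriminant condition holds: with p_1 = 4 q_1 q_2 (q_1 - q_2)(q_1 + q_2) and p_2 = 3(q_1^4 + q_2^4), the quartic expression (q_1^2 - q_2^2)^2 p_1^4 - 4 q_1 q_2 (q_1^2 - q_2^2) p_1^3 p_2 - (4 q_1^4 + 4 q_2^4) p_1^2 p_2^2 + 4 q_1 q_2 (q_1^2 - q_2^2) p_1 p_2^3 + (q_1^2 - q_2^2)^2 p_2^4 is a perfect square (of a polynomial in q_1, q_2 with integer coefficients). -/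
open MvPolynomial

theorem stmt_18 :
    ∃ m : MvPolynomial (Fin 2) ℤ,
      (fun (q₁ q₂ : MvPolynomial (Fin 2) ℤ) =>
        (fun (p₁ p₂ : MvPolynomial (Fin 2) ℤ) =>
          (q₁ ^ 2 - q₂ ^ 2) ^ 2 * p₁ ^ 4
            - 4 * q₁ * q₂ * (q₁ ^ 2 - q₂ ^ 2) * p₁ ^ 3 * p₂
            - (4 * q₁ ^ 4 + 4 * q₂ ^ 4) * p₁ ^ 2 * p₂ ^ 2
            + 4 * q₁ * q₂ * (q₁ ^ 2 - q₂ ^ 2) * p₁ * p₂ ^ 3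
            + (q₁ ^ 2 - q₂ ^ 2) ^ 2 * p₂ ^ 4)
          (4 * q₁ * q₂ * (q₁ - q₂) * (q₁ + q₂)) (3 * (q₁ ^ 4 + q₂ ^ 4)))
        (X 0) (X 1) = m ^ 2 := by
  use 9 * X 0 ^ 10 - 17 * X 0 ^ 8 * X 1 ^ 2 - 6 * X 0 ^ 6 * X 1 ^ 4
    + 6 * X 0 ^ 4 * X 1 ^ 6 + 17 * X 0 ^ 2 * X 1 ^ 8 - 9 * X 1 ^ 10
  ring
end

section
/- The eight squares 1793303948742806004358839863314163172496768^2, 35647669259187200217596168619979944579248^2, 1350335627724462794940009188342343291253664^2, 509318278582178443295965724916222044316304^2, 2125938053817649628168174016173670414131324^2, 863449486628378007179143401686267952168368^2, 2943648522151467304268140794140107220456896^2, 70025522883762244048096185376403205296573^2 are pairwise distinct, and the sum of any seven of them is a perfect square. -/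
lemma sq_ne_sq_of_injective_of_nonneg {ι R : Type*} [Semiring R] [LinearOrder R]
    [IsStrictOrderedRing R] {a : ι → R} (hinj : Function.Injective a) (hnonneg : ∀ i, 0 ≤ a i)
    {i j : ι} (hij : i ≠ j) : a i ^ 2 ≠ a j ^ 2 :=
  fun h => hij (hinj ((sq_eq_sq₀ (hnonneg i) (hnonneg j)).1 h))

def sumOfSevenRoot : Fin 8 → ℤ :=
  ![4002400528829166538479347417702710397036731,
    4385644569436164437290271847577349052742459,
    4172738038536149656777107985571858304119483,
    4356115693694397164879280588711333270083387,
    3836083476291744726574680341272956776219453,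
    4299953956705783497576850285423636867541819,
    3251166317459630525658766502613307905355963,
    4385230378428639436762193534122452386950684]

theorem stmt_19 (a : Fin 8 → ℤ)
    (ha : a = ![1793303948742806004358839863314163172496768,
                35647669259187200217596168619979944579248,
                1350335627724462794940009188342343291253664,
                509318278582178443295965724916222044316304,
                2125938053817649628168174016173670414131324,
                863449486628378007179143401686267952168368,
                2943648522151467304268140794140107220456896,
                70025522883762244048096185376403205296573]) :
    (∀ i j : Fin 8, i ≠ j → (a i) ^ 2 ≠ (a j) ^ 2) ∧
    (∀ i : Fin 8, ∃ m : ℤ, (∑ j, (a j) ^ 2) - (a i) ^ 2 = m ^ 2) := by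
  have hinj : Function.Injective a := by rw [ha]; decide
  have hnonneg : ∀ i, 0 ≤ a i := by rw [ha]; decide
  have hsum : ∀ i, (∑ j, a j ^ 2) - a i ^ 2 = sumOfSevenRoot i ^ 2 := by rw [ha]; decide
  exact ⟨fun _ _ => sq_ne_sq_of_injective_of_nonneg hinj hnonneg, fun i => ⟨_, hsum i⟩⟩
end
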